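/- Assume g is flat, V^i_j := η^{ik} ∂²h/∂u^k∂u^j = g^{ik}(∂²f/∂u^k∂u^j − Γ^m_{kj} ∂f/∂u^m) on U, and let a, b, p, q, h₀, Q, W, φ, Ū, ḡ, Γ̄ be as in the reciprocal-transformation setup. Then with Δ^{ijk} := η^{is}Γ^{jk}_s, Γ^{jk}_s := −g^{jl}Γ^k_{ls}, Δ̄^{ijk} := η̄^{is}Γ̄^{jk}_s and Γ̄^{jk}_s := −ḡ^{jl}Γ̄^k_{ls}, one has Δ̄^{ijk}(φ(u)) = W^j_s(u) Δ^{isk}(u) for all u ∈ U and all indices i, j, k. -/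

import Mathlib

open scoped BigOperators
open Matrix

/-- Partial derivative `∂f/∂xⁱ` at `x`. -/
noncomputable def pd {n : ℕ} (f : (Fin n → ℝ) → ℝ) (i : Fin n) (x : Fin n → ℝ) : ℝ :=
  fderiv ℝ f x (Pi.single i 1)

/-- Christoffel symbols `Γ^k_{ij}` of the metric with contravariant components `gU`
(the `g^{ij}`) and covariant components `gL` (the `g_{ij}`):
`Γ^k_{ij} = (1/2) g^{ks}(∂_i g_{sj} + ∂_j g_{si} − ∂_s g_{ij})`. -/
noncomputable def christoffel {n : ℕ}
    (gU gL : (Fin n → ℝ) → Matrix (Fin n) (Fin n) ℝ)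
    (k i j : Fin n) (x : Fin n → ℝ) : ℝ :=
  (1 / 2) * ∑ s, gU x k s *
    (pd (fun y => gL y s j) i x + pd (fun y => gL y s i) j x - pd (fun y => gL y i j) s x)

/-- Curvature tensor `R_{ijk}{}^s = ∂_i Γ^s_{jk} − ∂_j Γ^s_{ik} + Γ^s_{im}Γ^m_{jk} − Γ^s_{jm}Γ^m_{ik}`. -/
noncomputable def curvature {n : ℕ}
    (gU gL : (Fin n → ℝ) → Matrix (Fin n) (Fin n) ℝ)
    (i j k s : Fin n) (x : Fin n → ℝ) : ℝ :=
  pd (christoffel gU gL s j k) i x - pd (christoffel gU gL s i k) j x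
    + ∑ m, christoffel gU gL s i m x * christoffel gU gL m j k x
    - ∑ m, christoffel gU gL s j m x * christoffel gU gL m i k x

/-- Covariant derivative `∇_k V^i_j = ∂_k V^i_j + Γ^i_{km} V^m_j − Γ^m_{kj} V^i_m`
of a (1,1)-tensor `V`. -/
noncomputable def covDer {n : ℕ}
    (gU gL V : (Fin n → ℝ) → Matrix (Fin n) (Fin n) ℝ)
    (k i j : Fin n) (x : Fin n → ℝ) : ℝ :=
  pd (fun y => V y i j) k x + ∑ m, christoffel gU gL i k m x * V x m j
    - ∑ m, christoffel gU gL m k j x * V x i m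

/-- Raised partial derivative `∂^i := η^{is} ∂_{u^s}`. -/
noncomputable def pdUp {n : ℕ} (η : Matrix (Fin n) (Fin n) ℝ)
    (f : (Fin n → ℝ) → ℝ) (i : Fin n) (x : Fin n → ℝ) : ℝ :=
  ∑ s, η i s * pd f s x

section kit
variable {n : ℕ} {U : Set (Fin n → ℝ)} {x : Fin n → ℝ}

theorem pd_congr (hU : IsOpen U) (hx : x ∈ U) {F G : (Fin n → ℝ) → ℝ}
    (h : ∀ y ∈ U, F y = G y) (i : Fin n) : pd F i x = pd G i x := by
  unfold pd
  rw [Filter.EventuallyEq.fderiv_eq]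
  filter_upwards [hU.mem_nhds hx] with y hy using h y hy

theorem diffAt_of_cdo (hU : IsOpen U) (hx : x ∈ U) {F : (Fin n → ℝ) → ℝ}
    (hF : ContDiffOn ℝ (⊤ : ℕ∞) F U) : DifferentiableAt ℝ F x :=
  (hF.contDiffAt (hU.mem_nhds hx)).differentiableAt (by simp)

theorem pd_contDiffOn (hU : IsOpen U) {F : (Fin n → ℝ) → ℝ}
    (hF : ContDiffOn ℝ (⊤ : ℕ∞) F U) (i : Fin n) :
    ContDiffOn ℝ (⊤ : ℕ∞) (fun y => pd F i y) U :=
  (hF.fderiv_of_isOpen hU (by simp)).clm_apply contDiffOn_const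

theorem pd_sub {F G : (Fin n → ℝ) → ℝ} (hF : DifferentiableAt ℝ F x)
    (hG : DifferentiableAt ℝ G x) (i : Fin n) :
    pd (fun y => F y - G y) i x = pd F i x - pd G i x := by
  unfold pd; rw [fderiv_fun_sub hF hG]; rfl

theorem pd_mul {F G : (Fin n → ℝ) → ℝ} (hF : DifferentiableAt ℝ F x)
    (hG : DifferentiableAt ℝ G x) (i : Fin n) :
    pd (fun y => F y * G y) i x = F x * pd G i x + G x * pd F i x := by
  unfold pd; rw [fderiv_fun_mul hF hG]; rfl

theorem pd_const_mul {F : (Fin n → ℝ) → ℝ} (hF : DifferentiableAt ℝ F x) (c : ℝ) (i : Fin n) :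
    pd (fun y => c * F y) i x = c * pd F i x := by
  unfold pd; rw [fderiv_const_mul hF]; rfl

theorem pd_sum {ι : Type*} (s : Finset ι) {F : ι → (Fin n → ℝ) → ℝ}
    (hF : ∀ b ∈ s, DifferentiableAt ℝ (F b) x) (i : Fin n) :
    pd (fun y => ∑ b ∈ s, F b y) i x = ∑ b ∈ s, pd (F b) i x := by
  unfold pd; rw [fderiv_fun_sum hF]; simp

theorem pd_swap (hU : IsOpen U) (hx : x ∈ U) {F : (Fin n → ℝ) → ℝ}
    (hF : ContDiffOn ℝ (⊤ : ℕ∞) F U) (i j : Fin n) :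
    pd (pd F i) j x = pd (pd F j) i x := by
  have hF' : ContDiffOn ℝ (⊤ : ℕ∞) (fderiv ℝ F) U := hF.fderiv_of_isOpen hU (by simp)
  have hd2 : DifferentiableAt ℝ (fderiv ℝ F) x :=
    (hF'.contDiffAt (hU.mem_nhds hx)).differentiableAt (by simp)
  have hsymm : IsSymmSndFDerivAt ℝ F x :=
    (hF.contDiffAt (hU.mem_nhds hx)).isSymmSndFDerivAt (by rw [minSmoothness_of_isRCLikeNormedField]; exact WithTop.coe_le_coe.mpr (le_top : (2:ℕ∞) ≤ ⊤))
  have key : ∀ a b : Fin n, pd (pd F a) b x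
      = fderiv ℝ (fderiv ℝ F) x (Pi.single b 1) (Pi.single a 1) := by
    intro a b
    unfold pd
    rw [fderiv_clm_apply hd2 (differentiableAt_const _)]
    simp
  rw [key, key, hsymm]

theorem pd_comp {F : (Fin n → ℝ) → ℝ} {φ : (Fin n → ℝ) → (Fin n → ℝ)}
    (hF : DifferentiableAt ℝ F (φ x)) (hφ : DifferentiableAt ℝ φ x) (a : Fin n) :
    pd (fun y => F (φ y)) a x = ∑ b, pd F b (φ x) * pd (fun y => φ y b) a x := by
  have hcomp : fderiv ℝ (fun y => F (φ y)) x = (fderiv ℝ F (φ x)).comp (fderiv ℝ φ x) :=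
    fderiv_comp x hF hφ
  have hproj : ∀ b : Fin n, pd (fun y => φ y b) a x
      = fderiv ℝ φ x (Pi.single a 1) b := by
    intro b
    unfold pd
    have h2 : HasFDerivAt (fun y => φ y b)
        ((ContinuousLinearMap.proj (R := ℝ) (φ := fun _ : Fin n => ℝ) b).comp
          (fderiv ℝ φ x)) x :=
      ((ContinuousLinearMap.proj (R := ℝ) (φ := fun _ : Fin n => ℝ) b).hasFDerivAt
        (x := φ x)).comp x hφ.hasFDerivAt
    rw [h2.fderiv]
    rfl
  unfold pd
  rw [hcomp]
  have hv : fderiv ℝ φ x (Pi.single a 1)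
      = ∑ b, (fderiv ℝ φ x (Pi.single a 1) b) • (Pi.single b 1 : Fin n → ℝ) := by
    rw [← Finset.univ_sum_single (fderiv ℝ φ x (Pi.single a 1))]
    refine Finset.sum_congr rfl fun b _ => ?_
    rw [← Pi.single_smul, smul_eq_mul, mul_one]
    simp
  calc (fderiv ℝ F (φ x)).comp (fderiv ℝ φ x) (Pi.single a 1)
      = fderiv ℝ F (φ x) (fderiv ℝ φ x (Pi.single a 1)) := rfl
    _ = fderiv ℝ F (φ x) (∑ b, (fderiv ℝ φ x (Pi.single a 1) b) • (Pi.single b 1 : Fin n → ℝ)) := by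
        rw [← hv]
    _ = ∑ b, (fderiv ℝ φ x (Pi.single a 1) b) * (fderiv ℝ F (φ x) (Pi.single b 1)) := by
        rw [map_sum]
        refine Finset.sum_congr rfl fun b _ => ?_
        rw [(fderiv ℝ F (φ x)).map_smul]; rfl
    _ = ∑ b, pd F b (φ x) * pd (fun y => φ y b) a x := by
        refine Finset.sum_congr rfl fun b _ => ?_
        rw [hproj b]; unfold pd; ring

theorem pd3_symm (hU : IsOpen U) (hx : x ∈ U) {F : (Fin n → ℝ) → ℝ}
    (hF : ContDiffOn ℝ (⊤ : ℕ∞) F U) (c b j : Fin n) :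
    pd (fun y => pd (pd F j) b y) c x = pd (fun y => pd (pd F c) b y) j x := by
  have hin : ∀ p q : Fin n, ∀ y ∈ U, pd (pd F p) q y = pd (pd F q) p y :=
    fun p q y hy => pd_swap hU hy hF p q
  have hGb : ContDiffOn ℝ (⊤ : ℕ∞) (pd F b) U := pd_contDiffOn hU hF b
  calc pd (fun y => pd (pd F j) b y) c x
      = pd (fun y => pd (pd F b) j y) c x := pd_congr hU hx (fun y hy => hin j b y hy) c
    _ = pd (pd (pd F b) j) c x := rfl
    _ = pd (pd (pd F b) c) j x := pd_swap hU hx hGb j c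
    _ = pd (fun y => pd (pd F c) b y) j x := pd_congr hU hx (fun y hy => hin b c y hy) j

end kit

section geom
variable {n : ℕ} {U : Set (Fin n → ℝ)} {x : Fin n → ℝ}
variable {g gL : (Fin n → ℝ) → Matrix (Fin n) (Fin n) ℝ}

theorem christoffel_contDiffOn (hU : IsOpen U)
    (hgs : ∀ i j, ContDiffOn ℝ (⊤ : ℕ∞) (fun y => g y i j) U)
    (hgLs : ∀ i j, ContDiffOn ℝ (⊤ : ℕ∞) (fun y => gL y i j) U) (k i j : Fin n) :
    ContDiffOn ℝ (⊤ : ℕ∞) (fun y => christoffel g gL k i j y) U := by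
  unfold christoffel
  refine contDiffOn_const.mul (ContDiffOn.sum fun s _ => (hgs k s).mul ?_)
  exact ((pd_contDiffOn hU (hgLs s j) i).add (pd_contDiffOn hU (hgLs s i) j)).sub
    (pd_contDiffOn hU (hgLs i j) s)

theorem christoffel_symm (hU : IsOpen U) (hx : x ∈ U)
    (hsymgL : ∀ y ∈ U, ∀ a b, gL y a b = gL y b a) (k i j : Fin n) :
    christoffel g gL k i j x = christoffel g gL k j i x := by
  unfold christoffel
  refine congrArg _ (Finset.sum_congr rfl fun s _ => ?_)
  rw [pd_congr hU hx (fun y hy => hsymgL y hy i j) s]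
  ring

/-- metric compatibility: `∂_a gL_{ms} = Σ_b (gL_{mb} Γ^b_{sa} + gL_{sb} Γ^b_{ma})`. -/
theorem compat (hU : IsOpen U) (hx : x ∈ U)
    (hsymgL : ∀ y ∈ U, ∀ a b, gL y a b = gL y b a)
    (hgLg : gL x * g x = 1) (m s a : Fin n) :
    pd (fun y => gL y m s) a x
      = ∑ b, (gL x m b * christoffel g gL b s a x + gL x s b * christoffel g gL b m a x) := by
  have hδ : ∀ p c : Fin n, (∑ b, gL x p b * g x b c) = if p = c then 1 else 0 := by
    intro p c
    have := congrFun (congrFun hgLg p) c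
    rwa [Matrix.mul_apply, Matrix.one_apply] at this
  have collapse : ∀ (p : Fin n) (X : Fin n → ℝ),
      (∑ b, gL x p b * ∑ c, g x b c * X c) = X p := by
    intro p X
    calc (∑ b, gL x p b * ∑ c, g x b c * X c)
        = ∑ c, (∑ b, gL x p b * g x b c) * X c := by
          simp_rw [Finset.mul_sum, Finset.sum_mul]
          rw [Finset.sum_comm]
          refine Finset.sum_congr rfl fun c _ => Finset.sum_congr rfl fun b _ => by ring
      _ = ∑ c, (if p = c then (1:ℝ) else 0) * X c := by
          refine Finset.sum_congr rfl fun c _ => by rw [hδ]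
      _ = X p := by simp
  have e1 : (∑ b, gL x m b * christoffel g gL b s a x)
      = (1/2) * (pd (fun y => gL y m a) s x + pd (fun y => gL y m s) a x
          - pd (fun y => gL y s a) m x) := by
    unfold christoffel
    calc (∑ b, gL x m b * ((1/2) * ∑ c, g x b c *
            (pd (fun y => gL y c a) s x + pd (fun y => gL y c s) a x
              - pd (fun y => gL y s a) c x)))
        = (1/2) * (∑ b, gL x m b * ∑ c, g x b c *
            (pd (fun y => gL y c a) s x + pd (fun y => gL y c s) a x
              - pd (fun y => gL y s a) c x)) := by
          rw [Finset.mul_sum]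
          exact Finset.sum_congr rfl fun b _ => by ring
      _ = (1/2) * (pd (fun y => gL y m a) s x + pd (fun y => gL y m s) a x
            - pd (fun y => gL y s a) m x) := by
          rw [collapse m (fun c => pd (fun y => gL y c a) s x + pd (fun y => gL y c s) a x
            - pd (fun y => gL y s a) c x)]
  have e2 : (∑ b, gL x s b * christoffel g gL b m a x)
      = (1/2) * (pd (fun y => gL y s a) m x + pd (fun y => gL y s m) a x
          - pd (fun y => gL y m a) s x) := by
    unfold christoffel
    calc (∑ b, gL x s b * ((1/2) * ∑ c, g x b c *
            (pd (fun y => gL y c a) m x + pd (fun y => gL y c m) a x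
              - pd (fun y => gL y m a) c x)))
        = (1/2) * (∑ b, gL x s b * ∑ c, g x b c *
            (pd (fun y => gL y c a) m x + pd (fun y => gL y c m) a x
              - pd (fun y => gL y m a) c x)) := by
          rw [Finset.mul_sum]
          exact Finset.sum_congr rfl fun b _ => by ring
      _ = _ := by
          rw [collapse s (fun c => pd (fun y => gL y c a) m x + pd (fun y => gL y c m) a x
            - pd (fun y => gL y m a) c x)]
  rw [Finset.sum_add_distrib, e1, e2]
  have h3 : pd (fun y => gL y s m) a x = pd (fun y => gL y m s) a x :=
    pd_congr hU hx (fun y hy => hsymgL y hy s m) a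
  rw [h3]; ring

/-- the key algebraic computation for the transformed Christoffel symbols. -/
theorem key_alg {G Gl W : Matrix (Fin n) (Fin n) ℝ} {Γ : Fin n → Fin n → Fin n → ℝ}
    (hδ : ∀ k b, (∑ m, G k m * Gl m b) = if k = b then (1:ℝ) else 0)
    (hswap : ∀ s m l, (∑ c, Γ s m c * W c l) = ∑ c, Γ s l c * W c m)
    (k l t : Fin n) :
    (1/2) * (∑ m, G k m *
      ((∑ a, (∑ b, (Gl m b * Γ b t a + Gl t b * Γ b m a)) * W a l)
        + (∑ a, (∑ b, (Gl m b * Γ b l a + Gl l b * Γ b m a)) * W a t)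
        - (∑ a, (∑ b, (Gl l b * Γ b t a + Gl t b * Γ b l a)) * W a m)))
    = ∑ a, Γ k l a * W a t := by
  have collapse : ∀ (X : Fin n → ℝ), (∑ m, G k m * ∑ b, Gl m b * X b) = X k := by
    intro X
    calc (∑ m, G k m * ∑ b, Gl m b * X b)
        = ∑ b, (∑ m, G k m * Gl m b) * X b := by
          simp_rw [Finset.mul_sum, Finset.sum_mul]
          rw [Finset.sum_comm]
          refine Finset.sum_congr rfl fun c _ => Finset.sum_congr rfl fun b _ => by ring
      _ = ∑ b, (if k = b then (1:ℝ) else 0) * X b := by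
          refine Finset.sum_congr rfl fun c _ => by rw [hδ]
      _ = X k := by simp
  -- rearrangement: for fixed p q, Σ_a (Σ_b Gl p b * Γ b q a) * W a r = Σ_b Gl p b * (Σ_a Γ b q a * W a r)
  have rearr : ∀ (p q r : Fin n), (∑ a, (∑ b, Gl p b * Γ b q a) * W a r)
      = ∑ b, Gl p b * (∑ a, Γ b q a * W a r) := by
    intro p q r
    simp_rw [Finset.sum_mul, Finset.mul_sum]
    rw [Finset.sum_comm]
    exact Finset.sum_congr rfl fun a _ => Finset.sum_congr rfl fun b _ => by ring
  -- T1
  have hT1 : (∑ m, G k m * ∑ a, (∑ b, Gl m b * Γ b t a) * W a l) = ∑ a, Γ k l a * W a t := by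
    calc (∑ m, G k m * ∑ a, (∑ b, Gl m b * Γ b t a) * W a l)
        = ∑ m, G k m * ∑ b, Gl m b * (∑ a, Γ b t a * W a l) := by
          exact Finset.sum_congr rfl fun m _ => by rw [rearr]
      _ = ∑ a, Γ k t a * W a l := collapse _
      _ = ∑ a, Γ k l a * W a t := hswap k t l
  have hT3 : (∑ m, G k m * ∑ a, (∑ b, Gl m b * Γ b l a) * W a t) = ∑ a, Γ k l a * W a t := by
    calc (∑ m, G k m * ∑ a, (∑ b, Gl m b * Γ b l a) * W a t)
        = ∑ m, G k m * ∑ b, Gl m b * (∑ a, Γ b l a * W a t) := by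
          exact Finset.sum_congr rfl fun m _ => by rw [rearr]
      _ = ∑ a, Γ k l a * W a t := collapse _
  have hT2 : (∑ m, G k m * ∑ a, (∑ b, Gl t b * Γ b m a) * W a l)
      = ∑ m, G k m * ∑ a, (∑ b, Gl t b * Γ b l a) * W a m := by
    refine Finset.sum_congr rfl fun m _ => ?_
    rw [rearr, rearr]
    congr 1
    refine Finset.sum_congr rfl fun b _ => ?_
    rw [hswap b m l]
  have hT5 : (∑ m, G k m * ∑ a, (∑ b, Gl l b * Γ b t a) * W a m)
      = ∑ m, G k m * ∑ a, (∑ b, Gl l b * Γ b m a) * W a t := by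
    refine Finset.sum_congr rfl fun m _ => ?_
    rw [rearr, rearr]
    congr 1
    refine Finset.sum_congr rfl fun b _ => ?_
    rw [hswap b t m]
  simp only [Finset.sum_add_distrib, add_mul, mul_add, mul_sub, Finset.sum_sub_distrib]
  rw [hT1, hT3, hT2, hT5]
  ring

noncomputable def covHess {n : ℕ} (g gL : (Fin n → ℝ) → Matrix (Fin n) (Fin n) ℝ)
    (f : (Fin n → ℝ) → ℝ) (b j : Fin n) (y : Fin n → ℝ) : ℝ :=
  pd (pd f j) b y - ∑ m, christoffel g gL m b j y * pd f m y

theorem pd_covHess (hU : IsOpen U) (hx : x ∈ U)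
    (hgs : ∀ i j, ContDiffOn ℝ (⊤ : ℕ∞) (fun y => g y i j) U)
    (hgLs : ∀ i j, ContDiffOn ℝ (⊤ : ℕ∞) (fun y => gL y i j) U)
    {f : (Fin n → ℝ) → ℝ} (hf : ContDiffOn ℝ (⊤ : ℕ∞) f U) (c b j : Fin n) :
    pd (fun y => covHess g gL f b j y) c x
      = pd (fun y => pd (pd f j) b y) c x
        - ∑ m, (christoffel g gL m b j x * pd (pd f m) c x
            + pd f m x * pd (fun y => christoffel g gL m b j y) c x) := by
  unfold covHess
  rw [pd_sub (diffAt_of_cdo hU hx (pd_contDiffOn hU (pd_contDiffOn hU hf j) b))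
    (diffAt_of_cdo hU hx (ContDiffOn.sum fun m (_ : m ∈ Finset.univ) =>
      (christoffel_contDiffOn hU hgs hgLs m b j).mul (pd_contDiffOn hU hf m)))]
  rw [pd_sum (F := fun m y => christoffel g gL m b j y * pd f m y) Finset.univ (fun m _ => ((diffAt_of_cdo hU hx
    (christoffel_contDiffOn hU hgs hgLs m b j)).mul
    (diffAt_of_cdo hU hx (pd_contDiffOn hU hf m)))) c]
  congr 1
  refine Finset.sum_congr rfl fun m _ => ?_
  rw [pd_mul (diffAt_of_cdo hU hx (christoffel_contDiffOn hU hgs hgLs m b j))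
    (diffAt_of_cdo hU hx (pd_contDiffOn hU hf m))]

theorem F_symm (hU : IsOpen U) (hx : x ∈ U)
    (hgs : ∀ i j, ContDiffOn ℝ (⊤ : ℕ∞) (fun y => g y i j) U)
    (hgLs : ∀ i j, ContDiffOn ℝ (⊤ : ℕ∞) (fun y => gL y i j) U)
    (hsymgL : ∀ y ∈ U, ∀ a b, gL y a b = gL y b a)
    {f : (Fin n → ℝ) → ℝ} (hf : ContDiffOn ℝ (⊤ : ℕ∞) f U)
    (hflat : ∀ i j k s, curvature g gL i j k s x = 0) (c b j : Fin n) :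
    pd (fun y => covHess g gL f b j y) c x
        - ∑ m, christoffel g gL m c b x * covHess g gL f m j x
      = pd (fun y => covHess g gL f b c y) j x
        - ∑ m, christoffel g gL m j b x * covHess g gL f m c x := by
  rw [pd_covHess hU hx hgs hgLs hf c b j, pd_covHess hU hx hgs hgLs hf j b c]
  have hsymΓ : ∀ y ∈ U, ∀ k p q, christoffel g gL k p q y = christoffel g gL k q p y :=
    fun y hy k p q => christoffel_symm hU hy hsymgL k p q
  -- expand the covHess sums
  have expand : ∀ p q : Fin n, (∑ m, christoffel g gL m p b x * covHess g gL f m q x)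
      = (∑ m, christoffel g gL m p b x * pd (pd f q) m x)
        - ∑ m, christoffel g gL m p b x * ∑ r, christoffel g gL r m q x * pd f r x := by
    intro p q
    unfold covHess
    rw [← Finset.sum_sub_distrib]
    exact Finset.sum_congr rfl fun m _ => by ring
  rw [expand, expand]
  -- third derivative symmetry
  have h1 : pd (fun y => pd (pd f j) b y) c x = pd (fun y => pd (pd f c) b y) j x :=
    pd3_symm hU hx hf c b j
  -- split the middle sums
  have hsplit : ∀ p q : Fin n, (∑ m, (christoffel g gL m b p x * pd (pd f m) q x
      + pd f m x * pd (fun y => christoffel g gL m b p y) q x))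
      = (∑ m, christoffel g gL m b p x * pd (pd f m) q x)
        + ∑ m, pd f m x * pd (fun y => christoffel g gL m b p y) q x := by
    intro p q; rw [Finset.sum_add_distrib]
  rw [hsplit, hsplit, h1]
  -- B1 = C1' : Σ_m Γ^m_{bj} f2(c,m) = Σ_m Γ^m_{jb} f2(m,c)
  have hB1 : (∑ m, christoffel g gL m b j x * pd (pd f m) c x)
      = ∑ m, christoffel g gL m j b x * pd (pd f c) m x := by
    refine Finset.sum_congr rfl fun m _ => ?_
    rw [hsymΓ x hx m b j, pd_swap hU hx hf m c]
  -- C1 = B1' : Σ_m Γ^m_{cb} f2(m,j) = Σ_m Γ^m_{bc} f2(j,m)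
  have hC1 : (∑ m, christoffel g gL m c b x * pd (pd f j) m x)
      = ∑ m, christoffel g gL m b c x * pd (pd f m) j x := by
    refine Finset.sum_congr rfl fun m _ => ?_
    rw [hsymΓ x hx m c b, pd_swap hU hx hf j m]
  -- the curvature part: B2 − C2 = B2' − C2'
  have hcurv : (∑ m, pd f m x * pd (fun y => christoffel g gL m b j y) c x)
        - ∑ m, christoffel g gL m c b x * ∑ r, christoffel g gL r m j x * pd f r x
      = (∑ m, pd f m x * pd (fun y => christoffel g gL m b c y) j x)
        - ∑ m, christoffel g gL m j b x * ∑ r, christoffel g gL r m c x * pd f r x := by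
    -- reorganize the double sums
    have hd1 : (∑ m, christoffel g gL m c b x * ∑ r, christoffel g gL r m j x * pd f r x)
        = ∑ r, pd f r x * ∑ m, christoffel g gL r j m x * christoffel g gL m c b x := by
      simp_rw [Finset.mul_sum]
      rw [Finset.sum_comm]
      refine Finset.sum_congr rfl fun r _ => Finset.sum_congr rfl fun m _ => ?_
      rw [hsymΓ x hx r m j]
      ring
    have hd2 : (∑ m, christoffel g gL m j b x * ∑ r, christoffel g gL r m c x * pd f r x)
        = ∑ r, pd f r x * ∑ m, christoffel g gL r c m x * christoffel g gL m j b x := by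
      simp_rw [Finset.mul_sum]
      rw [Finset.sum_comm]
      refine Finset.sum_congr rfl fun r _ => Finset.sum_congr rfl fun m _ => ?_
      rw [hsymΓ x hx r m c]
      ring
    have hp1 : (∑ m, pd f m x * pd (fun y => christoffel g gL m b j y) c x)
        = ∑ m, pd f m x * pd (christoffel g gL m j b) c x := by
      refine Finset.sum_congr rfl fun m _ => ?_
      rw [pd_congr hU hx (fun y hy => hsymΓ y hy m b j) c]
    have hp2 : (∑ m, pd f m x * pd (fun y => christoffel g gL m b c y) j x)
        = ∑ m, pd f m x * pd (christoffel g gL m c b) j x := by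
      refine Finset.sum_congr rfl fun m _ => ?_
      rw [pd_congr hU hx (fun y hy => hsymΓ y hy m b c) j]
    rw [hd1, hd2, hp1, hp2, ← Finset.sum_sub_distrib, ← Finset.sum_sub_distrib]
    refine Finset.sum_congr rfl fun r _ => ?_
    have h0 := hflat c j b r
    unfold curvature at h0
    have : pd (christoffel g gL r j b) c x - pd (christoffel g gL r c b) j x
        + ∑ m, christoffel g gL r c m x * christoffel g gL m j b x
        - ∑ m, christoffel g gL r j m x * christoffel g gL m c b x = 0 := h0
    linear_combination (pd f r x) * this
  -- put everything together
  rw [hB1, hC1]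
  linarith [hcurv]

theorem diamond (hU : IsOpen U) (hx : x ∈ U)
    (hgs : ∀ i j, ContDiffOn ℝ (⊤ : ℕ∞) (fun y => g y i j) U)
    (hgLs : ∀ i j, ContDiffOn ℝ (⊤ : ℕ∞) (fun y => gL y i j) U)
    (hsymgL : ∀ y ∈ U, ∀ a b, gL y a b = gL y b a)
    (hinv : ∀ y ∈ U, g y * gL y = 1)
    {eta : Matrix (Fin n) (Fin n) ℝ} {h f : (Fin n → ℝ) → ℝ}
    {V : (Fin n → ℝ) → Matrix (Fin n) (Fin n) ℝ}
    (hh : ContDiffOn ℝ (⊤ : ℕ∞) h U) (hf : ContDiffOn ℝ (⊤ : ℕ∞) f U)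
    (hflat : ∀ i j k s, curvature g gL i j k s x = 0)
    (hVh : ∀ y ∈ U, ∀ i j, V y i j = ∑ k, eta i k * pd (pd h j) k y)
    (hVf : ∀ y ∈ U, ∀ i j, V y i j =
      ∑ k, g y i k * (pd (pd f j) k y - ∑ m, christoffel g gL m k j y * pd f m y))
    (K cc jj : Fin n) :
    (∑ s, christoffel g gL K s cc x * V x s jj)
      = ∑ s, christoffel g gL K s jj x * V x s cc := by
  have hδ : ∀ y ∈ U, ∀ p q : Fin n, (∑ b, g y p b * gL y b q) = if p = q then 1 else 0 := by
    intro y hy p q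
    have := congrFun (congrFun (hinv y hy) p) q
    rwa [Matrix.mul_apply, Matrix.one_apply] at this
  have hδ' : ∀ y ∈ U, ∀ p q : Fin n, (∑ b, gL y p b * g y b q) = if p = q then 1 else 0 := by
    intro y hy p q
    have h2 : gL y * g y = 1 := mul_eq_one_comm.mp (hinv y hy)
    have := congrFun (congrFun h2 p) q
    rwa [Matrix.mul_apply, Matrix.one_apply] at this
  -- covHess in terms of V (lowered)
  have hcovH_eq : ∀ y ∈ U, ∀ a j, covHess g gL f a j y = ∑ s, gL y a s * V y s j := by
    intro y hy a j
    have : (∑ s, gL y a s * V y s j)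
        = ∑ s, gL y a s * ∑ k, g y s k * covHess g gL f k j y := by
      refine Finset.sum_congr rfl fun s _ => ?_
      rw [hVf y hy s j]; unfold covHess; rfl
    rw [this]
    symm
    calc (∑ s, gL y a s * ∑ k, g y s k * covHess g gL f k j y)
        = ∑ k, (∑ s, gL y a s * g y s k) * covHess g gL f k j y := by
          simp_rw [Finset.mul_sum, Finset.sum_mul]
          rw [Finset.sum_comm]
          exact Finset.sum_congr rfl fun k _ => Finset.sum_congr rfl fun s _ => by ring
      _ = ∑ k, (if a = k then (1:ℝ) else 0) * covHess g gL f k j y := by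
          exact Finset.sum_congr rfl fun k _ => by rw [hδ' y hy a k]
      _ = covHess g gL f a j y := by simp
  -- the function equality to be differentiated
  have hfun_eq : ∀ a j, ∀ y ∈ U, covHess g gL f a j y
      = ∑ s, gL y a s * (∑ b, eta s b * pd (pd h j) b y) := by
    intro a j y hy
    rw [hcovH_eq y hy a j]
    exact Finset.sum_congr rfl fun s _ => by rw [hVh y hy s j]
  have hVH_smooth : ∀ s j : Fin n, ContDiffOn ℝ (⊤ : ℕ∞)
      (fun y => ∑ b, eta s b * pd (pd h j) b y) U := fun s j =>
    ContDiffOn.sum fun b _ => contDiffOn_const.mul (pd_contDiffOn hU (pd_contDiffOn hU hh j) b)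
  -- differentiate it
  have hdiff : ∀ a j c : Fin n, pd (fun y => covHess g gL f a j y) c x
      = (∑ s, gL x a s * (∑ b, eta s b * pd (fun y => pd (pd h j) b y) c x))
        + ∑ s, V x s j * pd (fun y => gL y a s) c x := by
    intro a j c
    rw [pd_congr hU hx (hfun_eq a j) c]
    rw [pd_sum (F := fun s y => gL y a s * ∑ b, eta s b * pd (pd h j) b y) Finset.univ (fun s _ => ((diffAt_of_cdo hU hx (hgLs a s)).mul
      (diffAt_of_cdo hU hx (hVH_smooth s j)))) c]
    rw [← Finset.sum_add_distrib]
    refine Finset.sum_congr rfl fun s _ => ?_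
    rw [pd_mul (diffAt_of_cdo hU hx (hgLs a s)) (diffAt_of_cdo hU hx (hVH_smooth s j))]
    rw [pd_sum (F := fun b y => eta s b * pd (pd h j) b y) Finset.univ (fun b _ => (differentiableAt_const _).mul
      (diffAt_of_cdo hU hx (pd_contDiffOn hU (pd_contDiffOn hU hh j) b))) c]
    have : ∀ b : Fin n, pd (fun y => eta s b * pd (pd h j) b y) c x
        = eta s b * pd (fun y => pd (pd h j) b y) c x :=
      fun b => pd_const_mul (diffAt_of_cdo hU hx (pd_contDiffOn hU (pd_contDiffOn hU hh j) b)) _ c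
    simp_rw [this]
    rw [hVh x hx s j]
  -- rewrite the gL-derivative via compatibility and split
  have hmain : ∀ a j c : Fin n, pd (fun y => covHess g gL f a j y) c x
      - ∑ m, christoffel g gL m c a x * covHess g gL f m j x
      = (∑ s, gL x a s * (∑ b, eta s b * pd (fun y => pd (pd h j) b y) c x))
        + ∑ m, gL x a m * (∑ s, christoffel g gL m s c x * V x s j) := by
    intro a j c
    rw [hdiff a j c]
    have hc : ∀ s : Fin n, pd (fun y => gL y a s) c x
        = ∑ m, (gL x a m * christoffel g gL m s c x + gL x s m * christoffel g gL m a c x) :=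
      fun s => compat hU hx hsymgL (mul_eq_one_comm.mp (hinv x hx)) a s c
    simp_rw [hc]
    have hsplit : (∑ s, V x s j * ∑ m, (gL x a m * christoffel g gL m s c x
        + gL x s m * christoffel g gL m a c x))
        = (∑ m, gL x a m * (∑ s, christoffel g gL m s c x * V x s j))
          + ∑ m, christoffel g gL m c a x * covHess g gL f m j x := by
      simp_rw [Finset.mul_sum, mul_add, Finset.sum_add_distrib]
      congr 1
      · rw [Finset.sum_comm]
        exact Finset.sum_congr rfl fun m _ => Finset.sum_congr rfl fun s _ => by ring
      · rw [Finset.sum_comm]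
        refine Finset.sum_congr rfl fun m _ => ?_
        rw [hcovH_eq x hx m j, christoffel_symm hU hx hsymgL m c a, Finset.mul_sum]
        refine Finset.sum_congr rfl fun s _ => ?_
        rw [hsymgL x hx s m]
        ring
    rw [hsplit]
    ring
  -- antisymmetrize using F_symm and third-derivative symmetry of h
  have hP : ∀ a : Fin n, (∑ s, gL x a s * (∑ b, eta s b * pd (fun y => pd (pd h jj) b y) cc x))
      = ∑ s, gL x a s * (∑ b, eta s b * pd (fun y => pd (pd h cc) b y) jj x) := by
    intro a
    refine Finset.sum_congr rfl fun s _ => ?_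
    congr 1
    refine Finset.sum_congr rfl fun b _ => ?_
    rw [pd3_symm hU hx hh cc b jj]
  have hD : ∀ a : Fin n, (∑ m, gL x a m * (∑ s, christoffel g gL m s cc x * V x s jj))
      = ∑ m, gL x a m * (∑ s, christoffel g gL m s jj x * V x s cc) := by
    intro a
    have h1 := hmain a jj cc
    have h2 := hmain a cc jj
    have h3 := F_symm hU hx hgs hgLs hsymgL hf hflat cc a jj
    rw [h1, h2] at h3
    rw [hP a] at h3
    linarith [h3]
  -- strip the gL factor
  have final := hD
  calc (∑ s, christoffel g gL K s cc x * V x s jj)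
      = ∑ m, (if K = m then (1:ℝ) else 0) * (∑ s, christoffel g gL m s cc x * V x s jj) := by
        simp
    _ = ∑ m, (∑ a, g x K a * gL x a m) * (∑ s, christoffel g gL m s cc x * V x s jj) := by
        exact Finset.sum_congr rfl fun m _ => by rw [hδ x hx K m]
    _ = ∑ a, g x K a * ∑ m, gL x a m * (∑ s, christoffel g gL m s cc x * V x s jj) := by
        simp_rw [Finset.sum_mul, Finset.mul_sum]
        rw [Finset.sum_comm]
        exact Finset.sum_congr rfl fun a _ => Finset.sum_congr rfl fun m _ =>
          Finset.sum_congr rfl fun p _ => by ring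
    _ = ∑ a, g x K a * ∑ m, gL x a m * (∑ s, christoffel g gL m s jj x * V x s cc) := by
        exact Finset.sum_congr rfl fun a _ => by rw [hD a]
    _ = ∑ m, (∑ a, g x K a * gL x a m) * (∑ s, christoffel g gL m s jj x * V x s cc) := by
        simp_rw [Finset.sum_mul, Finset.mul_sum]
        rw [Finset.sum_comm]
        exact Finset.sum_congr rfl fun a _ => Finset.sum_congr rfl fun m _ =>
          Finset.sum_congr rfl fun p _ => by ring
    _ = ∑ m, (if K = m then (1:ℝ) else 0) * (∑ s, christoffel g gL m s jj x * V x s cc) := by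
        exact Finset.sum_congr rfl fun m _ => by rw [hδ x hx K m]
    _ = ∑ s, christoffel g gL K s jj x * V x s cc := by simp

theorem RW_symm {R Q W V : Matrix (Fin n) (Fin n) ℝ} {p q : ℝ}
    (hRsym : Rᵀ = R) (hRV : (R * V)ᵀ = R * V)
    (hQ : Q = q • (1 : Matrix (Fin n) (Fin n) ℝ) - p • V)
    (hQW : Q * W = 1) (hWQ : W * Q = 1) : (R * W)ᵀ = R * W := by
  have hRQ : (R * Q)ᵀ = R * Q := by
    rw [hQ, Matrix.mul_sub, Matrix.mul_smul, Matrix.mul_smul, Matrix.mul_one,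
      Matrix.transpose_sub, Matrix.transpose_smul, Matrix.transpose_smul, hRsym, hRV]
  have h2 : R * Q = Qᵀ * R := by
    conv_lhs => rw [← hRQ]
    rw [Matrix.transpose_mul, hRsym]
  have hR : R = (Qᵀ * R) * W := by
    rw [← h2, Matrix.mul_assoc, hQW, Matrix.mul_one]
  calc (R * W)ᵀ = Wᵀ * Rᵀ := Matrix.transpose_mul R W
    _ = Wᵀ * R := by rw [hRsym]
    _ = Wᵀ * ((Qᵀ * R) * W) := by rw [← hR]
    _ = ((Wᵀ * Qᵀ) * R) * W := by rw [Matrix.mul_assoc (Wᵀ * Qᵀ) R W, Matrix.mul_assoc Wᵀ Qᵀ (R * W), ← Matrix.mul_assoc Qᵀ R W]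
    _ = ((Q * W)ᵀ * R) * W := by rw [Matrix.transpose_mul]
    _ = R * W := by rw [hQW, Matrix.transpose_one, Matrix.one_mul]

theorem WG_symm {G Gl Q W : Matrix (Fin n) (Fin n) ℝ}
    (hGsym : Gᵀ = G) (hGGl : G * Gl = 1)
    (hS : (Gl * Q)ᵀ = Gl * Q) (hQW : Q * W = 1) (hWQ : W * Q = 1) :
    W * G = G * Wᵀ := by
  have h1 : G * (Gl * Q) = Q := by rw [← Matrix.mul_assoc, hGGl, Matrix.one_mul]
  have h2 : (W * G) * (Gl * Q) = 1 := by
    rw [Matrix.mul_assoc, h1, hWQ]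
  have h2' : (Gl * Q) * (W * G) = 1 := mul_eq_one_comm.mp h2
  have h3' : (G * Wᵀ) * (Gl * Q) = 1 := by
    have h4 := congrArg Matrix.transpose h2'
    rwa [Matrix.transpose_mul, Matrix.transpose_mul, hGsym, hS, Matrix.transpose_one] at h4
  have h3 : (Gl * Q) * (G * Wᵀ) = 1 := mul_eq_one_comm.mp h3'
  calc W * G = (W * G) * (((Gl * Q)) * (G * Wᵀ)) := by rw [h3, Matrix.mul_one]
    _ = ((W * G) * (Gl * Q)) * (G * Wᵀ) := (Matrix.mul_assoc _ _ _).symm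
    _ = G * Wᵀ := by rw [h2, Matrix.one_mul]

theorem pullback_pd (hU : IsOpen U) (hx : x ∈ U)
    {phi : (Fin n → ℝ) → (Fin n → ℝ)} {F Fb : (Fin n → ℝ) → ℝ}
    {Qm : Matrix (Fin n) (Fin n) ℝ}
    (hUb : IsOpen (phi '' U)) (hFb : ContDiffOn ℝ (⊤ : ℕ∞) Fb (phi '' U))
    (hphi_smooth : ∀ i, ContDiffOn ℝ (⊤ : ℕ∞) (fun y => phi y i) U)
    (hFeq : ∀ y ∈ U, F y = Fb (phi y))
    (hJ : ∀ i j, pd (fun y => phi y i) j x = Qm i j) (a : Fin n) :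
    pd F a x = ∑ b, Qm b a * pd Fb b (phi x) := by
  have hphidiff : DifferentiableAt ℝ phi x :=
    differentiableAt_pi.mpr (fun i => diffAt_of_cdo hU hx (hphi_smooth i))
  have hFbdiff : DifferentiableAt ℝ Fb (phi x) :=
    diffAt_of_cdo hUb (Set.mem_image_of_mem phi hx) hFb
  calc pd F a x = pd (fun y => Fb (phi y)) a x := pd_congr hU hx hFeq a
    _ = ∑ b, pd Fb b (phi x) * pd (fun y => phi y b) a x := pd_comp hFbdiff hphidiff a
    _ = ∑ b, Qm b a * pd Fb b (phi x) := by
        refine Finset.sum_congr rfl fun b _ => ?_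
        rw [hJ b a]; ring

end geom

theorem stmt_8
    (n : ℕ) (hn : 1 ≤ n)
    (U : Set (Fin n → ℝ)) (hU_open : IsOpen U) (hU_conn : IsConnected U)
    (hU_sc : SimplyConnectedSpace U)
    (eta etaL : Matrix (Fin n) (Fin n) ℝ)
    (heta_symm : eta.IsSymm) (heta_inv : eta * etaL = 1)
    (g gL : (Fin n → ℝ) → Matrix (Fin n) (Fin n) ℝ)
    (hg_smooth : ∀ i j, ContDiffOn ℝ (⊤ : ℕ∞) (fun x => g x i j) U)
    (hgL_smooth : ∀ i j, ContDiffOn ℝ (⊤ : ℕ∞) (fun x => gL x i j) U)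
    (hg_symm : ∀ x ∈ U, (g x).IsSymm)
    (hg_inv : ∀ x ∈ U, g x * gL x = 1)
    (hg_flat : ∀ x ∈ U, ∀ i j k s, curvature g gL i j k s x = 0)
    (h f : (Fin n → ℝ) → ℝ) (hh : ContDiffOn ℝ (⊤ : ℕ∞) h U) (hf : ContDiffOn ℝ (⊤ : ℕ∞) f U)
    (V : (Fin n → ℝ) → Matrix (Fin n) (Fin n) ℝ)
    (hVh : ∀ x ∈ U, ∀ i j, V x i j = ∑ k, eta i k * pd (pd h j) k x)
    (hVf : ∀ x ∈ U, ∀ i j, V x i j =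
      ∑ k, g x i k * (pd (pd f j) k x - ∑ m, christoffel g gL m k j x * pd f m x))
    (a b p q : ℝ) (habpq : a * q - b * p ≠ 0)
    (Q W : (Fin n → ℝ) → Matrix (Fin n) (Fin n) ℝ)
    (hQ : ∀ x ∈ U, Q x = q • (1 : Matrix (Fin n) (Fin n) ℝ) - p • V x)
    (hQW : ∀ x ∈ U, Q x * W x = 1 ∧ W x * Q x = 1)
    (phi psi : (Fin n → ℝ) → (Fin n → ℝ))
    (hphi : ∀ x ∈ U, ∀ i, phi x i = q * x i - p * ∑ k, eta i k * pd h k x)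
    (hphi_smooth : ∀ i, ContDiffOn ℝ (⊤ : ℕ∞) (fun x => phi x i) U)
    (hphi_inj : Set.InjOn phi U)
    (hUb_open : IsOpen (phi '' U))
    (hpsi : ∀ x ∈ U, psi (phi x) = x)
    (hpsi_smooth : ∀ i, ContDiffOn ℝ (⊤ : ℕ∞) (fun v => psi v i) (phi '' U))
    (hJac : ∀ x ∈ U, ∀ i j, pd (fun y => phi y i) j x = Q x i j)
    (gb gbL : (Fin n → ℝ) → Matrix (Fin n) (Fin n) ℝ)
    (hgb : ∀ x ∈ U, gb (phi x) = g x)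
    (hgbL : ∀ x ∈ U, gbL (phi x) = gL x)
    (hgb_smooth : ∀ i j, ContDiffOn ℝ (⊤ : ℕ∞) (fun v => gb v i j) (phi '' U))
    (hgbL_smooth : ∀ i j, ContDiffOn ℝ (⊤ : ℕ∞) (fun v => gbL v i j) (phi '' U))
    (Del : (Fin n → ℝ) → Fin n → Fin n → Fin n → ℝ)
    (hDel : ∀ x, ∀ i j k, Del x i j k =
      ∑ s, eta i s * (-∑ l, g x j l * christoffel g gL k l s x))
    (Delb : (Fin n → ℝ) → Fin n → Fin n → Fin n → ℝ)
    (hDelb : ∀ v, ∀ i j k, Delb v i j k =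
      ∑ s, eta i s * (-∑ l, gb v j l * christoffel gb gbL k l s v))
    :
    ∀ x ∈ U, ∀ i j k, Delb (phi x) i j k = ∑ s, W x j s * Del x i s k := by
  intro x hx i j k
  -- ===== basic pointwise facts =====
  have hgLg : ∀ y ∈ U, gL y * g y = 1 := fun y hy => mul_eq_one_comm.mp (hg_inv y hy)
  have hsymgL : ∀ y ∈ U, ∀ a' b', gL y a' b' = gL y b' a' := by
    intro y hy a' b'
    have ht := congrArg Matrix.transpose (hg_inv y hy)
    rw [Matrix.transpose_mul, (hg_symm y hy).eq, Matrix.transpose_one] at ht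
    have h1 : (gL y)ᵀ = gL y := by
      calc (gL y)ᵀ = (gL y)ᵀ * (g y * gL y) := by rw [hg_inv y hy, Matrix.mul_one]
        _ = ((gL y)ᵀ * g y) * gL y := (Matrix.mul_assoc _ _ _).symm
        _ = gL y := by rw [ht, Matrix.one_mul]
    have h2 := congrFun (congrFun h1 a') b'
    rw [Matrix.transpose_apply] at h2
    exact h2.symm
  have hδg : ∀ p' q' : Fin n, (∑ m, g x p' m * gL x m q') = if p' = q' then 1 else 0 := by
    intro p' q'
    have := congrFun (congrFun (hg_inv x hx) p') q'
    rwa [Matrix.mul_apply, Matrix.one_apply] at this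
  have hδg' : ∀ p' q' : Fin n, (∑ m, gL x p' m * g x m q') = if p' = q' then 1 else 0 := by
    intro p' q'
    have := congrFun (congrFun (hgLg x hx) p') q'
    rwa [Matrix.mul_apply, Matrix.one_apply] at this
  have hδQW : ∀ p' q' : Fin n, (∑ m, Q x p' m * W x m q') = if p' = q' then 1 else 0 := by
    intro p' q'
    have := congrFun (congrFun (hQW x hx).1 p') q'
    rwa [Matrix.mul_apply, Matrix.one_apply] at this
  have hΓsym : ∀ K p' q' : Fin n, christoffel g gL K p' q' x = christoffel g gL K q' p' x :=
    fun K p' q' => christoffel_symm hU_open hx hsymgL K p' q'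
  -- ===== the diamond symmetry, in W form =====
  have hdiam := fun K cc jj => diamond hU_open hx hg_smooth hgL_smooth hsymgL hg_inv hh hf
    (hg_flat x hx) hVh hVf K cc jj
  have hswap : ∀ K m l : Fin n, (∑ c, christoffel g gL K m c x * W x c l)
      = ∑ c, christoffel g gL K l c x * W x c m := by
    intro K m l
    set R : Matrix (Fin n) (Fin n) ℝ := Matrix.of fun m' c' => christoffel g gL K m' c' x with hR
    have hRsym : Rᵀ = R := by
      ext p' q'
      simp only [Matrix.transpose_apply, hR, Matrix.of_apply]
      exact (hΓsym K p' q').symm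
    have hRV : (R * V x)ᵀ = R * V x := by
      ext p' q'
      simp only [Matrix.transpose_apply, Matrix.mul_apply, hR, Matrix.of_apply]
      calc (∑ c, christoffel g gL K q' c x * V x c p')
          = ∑ c, christoffel g gL K c q' x * V x c p' := by
            exact Finset.sum_congr rfl fun c _ => by rw [hΓsym K q' c]
        _ = ∑ c, christoffel g gL K c p' x * V x c q' := hdiam K q' p'
        _ = ∑ c, christoffel g gL K p' c x * V x c q' := by
            exact Finset.sum_congr rfl fun c _ => by rw [hΓsym K c p']
    have hRW := RW_symm hRsym hRV (hQ x hx) (hQW x hx).1 (hQW x hx).2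
    have := congrFun (congrFun hRW l) m
    rw [Matrix.transpose_apply, Matrix.mul_apply, Matrix.mul_apply] at this
    simpa only [hR, Matrix.of_apply] using this
  -- ===== g-symmetry of W =====
  have hcovH_eq_x : ∀ a' b' : Fin n, (∑ s, gL x a' s * V x s b') = covHess g gL f a' b' x := by
    intro a' b'
    have h1 : (∑ s, gL x a' s * V x s b')
        = ∑ s, gL x a' s * ∑ m, g x s m * covHess g gL f m b' x := by
      refine Finset.sum_congr rfl fun s _ => ?_
      rw [hVf x hx s b']; unfold covHess; rfl
    rw [h1]
    calc (∑ s, gL x a' s * ∑ m, g x s m * covHess g gL f m b' x)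
        = ∑ m, (∑ s, gL x a' s * g x s m) * covHess g gL f m b' x := by
          simp_rw [Finset.mul_sum, Finset.sum_mul]
          rw [Finset.sum_comm]
          exact Finset.sum_congr rfl fun m _ => Finset.sum_congr rfl fun s _ => by ring
      _ = ∑ m, (if a' = m then (1:ℝ) else 0) * covHess g gL f m b' x := by
          exact Finset.sum_congr rfl fun m _ => by rw [hδg' a' m]
      _ = covHess g gL f a' b' x := by simp
  have hcovHsym : ∀ a' b' : Fin n, covHess g gL f a' b' x = covHess g gL f b' a' x := by
    intro a' b'
    unfold covHess
    rw [pd_swap hU_open hx hf b' a']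
    congr 1
    exact Finset.sum_congr rfl fun m _ => by rw [hΓsym m a' b']
  have hSsym : (gL x * Q x)ᵀ = gL x * Q x := by
    have key : ∀ a' b' : Fin n, (gL x * Q x) a' b' = (gL x * Q x) b' a' := by
      intro a' b'
      have expand : ∀ a'' b'' : Fin n, (gL x * Q x) a'' b''
          = q * gL x a'' b'' - p * covHess g gL f a'' b'' x := by
        intro a'' b''
        rw [Matrix.mul_apply]
        calc (∑ s, gL x a'' s * Q x s b'')
            = ∑ s, gL x a'' s * (q * (if s = b'' then (1:ℝ) else 0) - p * V x s b'') := by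
              refine Finset.sum_congr rfl fun s _ => ?_
              rw [hQ x hx]
              simp [Matrix.sub_apply, Matrix.smul_apply, Matrix.one_apply, smul_eq_mul]
          _ = (∑ s, gL x a'' s * (q * (if s = b'' then (1:ℝ) else 0)))
                - ∑ s, p * (gL x a'' s * V x s b'') := by
              rw [← Finset.sum_sub_distrib]
              exact Finset.sum_congr rfl fun s _ => by ring
          _ = q * gL x a'' b'' - p * covHess g gL f a'' b'' x := by
              rw [← Finset.mul_sum, hcovH_eq_x a'' b'']
              congr 1
              rw [Finset.sum_eq_single b'']
              · simp [mul_comm]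
              · intro s _ hs; simp [hs]
              · intro hb; exact absurd (Finset.mem_univ b'') hb
      rw [expand a' b', expand b' a', hsymgL x hx a' b', hcovHsym a' b']
    ext p' q'
    rw [Matrix.transpose_apply]
    exact key q' p'
  have hWGmat := WG_symm (hg_symm x hx).eq (hg_inv x hx) hSsym (hQW x hx).1 (hQW x hx).2
  have hWG : ∀ j' l' : Fin n, (∑ s, W x j' s * g x s l') = ∑ s, g x j' s * W x l' s := by
    intro j' l'
    have := congrFun (congrFun hWGmat j') l'
    rw [Matrix.mul_apply, Matrix.mul_apply] at this
    simpa [Matrix.transpose_apply] using this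
  -- ===== chain rule for the pulled-back metric =====
  have hpdgL : ∀ s t a' : Fin n, pd (fun y => gL y s t) a' x
      = ∑ b', Q x b' a' * pd (fun v => gbL v s t) b' (phi x) := by
    intro s t a'
    exact pullback_pd hU_open hx hUb_open (hgbL_smooth s t) hphi_smooth
      (fun y hy => (congrFun (congrFun (hgbL y hy) s) t).symm) (hJac x hx) a'
  have hpdv : ∀ s t i' : Fin n, pd (fun v => gbL v s t) i' (phi x)
      = ∑ a', pd (fun y => gL y s t) a' x * W x a' i' := by
    intro s t i'
    symm
    calc (∑ a', pd (fun y => gL y s t) a' x * W x a' i')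
        = ∑ a', (∑ b', Q x b' a' * pd (fun v => gbL v s t) b' (phi x)) * W x a' i' := by
          exact Finset.sum_congr rfl fun a' _ => by rw [hpdgL s t a']
      _ = ∑ b', (∑ a', Q x b' a' * W x a' i') * pd (fun v => gbL v s t) b' (phi x) := by
          simp_rw [Finset.sum_mul]
          rw [Finset.sum_comm]
          exact Finset.sum_congr rfl fun b' _ => Finset.sum_congr rfl fun a' _ => by ring
      _ = ∑ b', (if b' = i' then (1:ℝ) else 0) * pd (fun v => gbL v s t) b' (phi x) := by
          exact Finset.sum_congr rfl fun b' _ => by rw [hδQW b' i']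
      _ = pd (fun v => gbL v s t) i' (phi x) := by simp
  -- ===== transformed Christoffel symbols =====
  have hGbar : ∀ K l t : Fin n, christoffel gb gbL K l t (phi x)
      = ∑ a', christoffel g gL K l a' x * W x a' t := by
    intro K l t
    have e1 : christoffel gb gbL K l t (phi x)
        = (1/2) * ∑ m, g x K m *
          ((∑ a', (∑ b', (gL x m b' * christoffel g gL b' t a' x
              + gL x t b' * christoffel g gL b' m a' x)) * W x a' l)
            + (∑ a', (∑ b', (gL x m b' * christoffel g gL b' l a' x
              + gL x l b' * christoffel g gL b' m a' x)) * W x a' t)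
            - (∑ a', (∑ b', (gL x l b' * christoffel g gL b' t a' x
              + gL x t b' * christoffel g gL b' l a' x)) * W x a' m)) := by
      calc christoffel gb gbL K l t (phi x)
          = (1/2) * ∑ m, gb (phi x) K m *
            (pd (fun v => gbL v m t) l (phi x) + pd (fun v => gbL v m l) t (phi x)
              - pd (fun v => gbL v l t) m (phi x)) := rfl
        _ = _ := by
            congr 1
            refine Finset.sum_congr rfl fun m _ => ?_
            have hgbx : gb (phi x) K m = g x K m := congrFun (congrFun (hgb x hx) K) m
            rw [hgbx]
            congr 1
            rw [hpdv m t l, hpdv m l t, hpdv l t m]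
            congr 1
            · congr 1
              · exact Finset.sum_congr rfl fun a' _ => by
                  rw [compat hU_open hx hsymgL (hgLg x hx) m t a']
              · exact Finset.sum_congr rfl fun a' _ => by
                  rw [compat hU_open hx hsymgL (hgLg x hx) m l a']
            · exact Finset.sum_congr rfl fun a' _ => by
                rw [compat hU_open hx hsymgL (hgLg x hx) l t a']
    rw [e1]
    exact key_alg hδg (fun s' m' l' => hswap s' m' l') K l t
  -- ===== final assembly =====
  rw [hDelb (phi x) i j k]
  -- canonical form
  have LHSe : (∑ s, eta i s * (-∑ l, gb (phi x) j l * christoffel gb gbL k l s (phi x)))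
      = ∑ s, ∑ l, ∑ a', -(eta i s * g x j l
          * (christoffel g gL k l a' x * W x a' s)) := by
    refine Finset.sum_congr rfl fun s _ => ?_
    have h1 : (∑ l, gb (phi x) j l * christoffel gb gbL k l s (phi x))
        = ∑ l, ∑ a', g x j l * (christoffel g gL k l a' x * W x a' s) := by
      refine Finset.sum_congr rfl fun l _ => ?_
      rw [congrFun (congrFun (hgb x hx) j) l, hGbar k l s, Finset.mul_sum]
    rw [h1, mul_neg, Finset.mul_sum, ← Finset.sum_neg_distrib]
    refine Finset.sum_congr rfl fun l _ => ?_
    rw [Finset.mul_sum, ← Finset.sum_neg_distrib]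
    exact Finset.sum_congr rfl fun a' _ => by ring
  have RHSe : (∑ s, W x j s * Del x i s k)
      = ∑ s, ∑ l, ∑ a', -(eta i s * g x j l
          * (christoffel g gL k l a' x * W x a' s)) := by
    calc (∑ s, W x j s * Del x i s k)
        = ∑ s, ∑ t, ∑ l, -(eta i t * christoffel g gL k l t x * (W x j s * g x s l)) := by
          refine Finset.sum_congr rfl fun s _ => ?_
          rw [hDel x i s k, Finset.mul_sum]
          refine Finset.sum_congr rfl fun t _ => ?_
          rw [mul_neg, mul_neg, Finset.sum_neg_distrib, neg_inj, Finset.mul_sum,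
            Finset.mul_sum]
          exact Finset.sum_congr rfl fun l _ => by ring
      _ = ∑ t, ∑ l, ∑ s, -(eta i t * christoffel g gL k l t x * (W x j s * g x s l)) := by
          rw [Finset.sum_comm]
          exact Finset.sum_congr rfl fun t _ => Finset.sum_comm
      _ = ∑ t, ∑ l, -(eta i t * christoffel g gL k l t x * (∑ s, W x j s * g x s l)) := by
          refine Finset.sum_congr rfl fun t _ => Finset.sum_congr rfl fun l _ => ?_
          rw [Finset.mul_sum, ← Finset.sum_neg_distrib]
      _ = ∑ t, ∑ l, -(eta i t * christoffel g gL k l t x * (∑ s, g x j s * W x l s)) := by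
          refine Finset.sum_congr rfl fun t _ => Finset.sum_congr rfl fun l _ => ?_
          rw [hWG j l]
      _ = ∑ t, ∑ l, ∑ s, -(eta i t * g x j s * (christoffel g gL k l t x * W x l s)) := by
          refine Finset.sum_congr rfl fun t _ => Finset.sum_congr rfl fun l _ => ?_
          rw [Finset.mul_sum, ← Finset.sum_neg_distrib]
          exact Finset.sum_congr rfl fun s _ => by ring
      _ = ∑ t, ∑ s, ∑ l, -(eta i t * g x j s * (christoffel g gL k l t x * W x l s)) := by
          exact Finset.sum_congr rfl fun t _ => Finset.sum_comm
      _ = ∑ t, ∑ s, -(eta i t * g x j s * (∑ l, christoffel g gL k l t x * W x l s)) := by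
          refine Finset.sum_congr rfl fun t _ => Finset.sum_congr rfl fun s _ => ?_
          rw [Finset.mul_sum, ← Finset.sum_neg_distrib]
      _ = ∑ t, ∑ s, -(eta i t * g x j s * (∑ l, christoffel g gL k s l x * W x l t)) := by
          refine Finset.sum_congr rfl fun t _ => Finset.sum_congr rfl fun s _ => ?_
          have hh1 : (∑ l, christoffel g gL k l t x * W x l s)
              = ∑ l, christoffel g gL k t l x * W x l s :=
            Finset.sum_congr rfl fun l _ => by rw [hΓsym k l t]
          rw [hh1, hswap k t s]
      _ = ∑ t, ∑ s, ∑ l, -(eta i t * g x j s * (christoffel g gL k s l x * W x l t)) := by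
          refine Finset.sum_congr rfl fun t _ => Finset.sum_congr rfl fun s _ => ?_
          rw [Finset.mul_sum, ← Finset.sum_neg_distrib]

  rw [LHSe, RHSe]
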